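/- Fix β ∈ (0,1) and C_β ≥ 2, and let ε, ε₀ ∈ (0,1) with ε₀ ≤ ε, C_β·ε^β ≤ 1 and ε₀^{1−β} ≤ C_β − 2. For σ ∈ {0,1} let P = P_ε(σ) and let Q_σ = P_{ε₀}(σ), Q_{1−σ} = P_{ε₀}(1−σ). Then for i.i.d. samples of size n: E_{Z ~ P^n}[ log( Q_σ^n(Z) / Q_{1−σ}^n(Z) ) ] ≤ n·ε·ε₀^{1−β}, and E_{Z ~ Q_σ^n}[ log( Q_σ^n(Z) / Q_{1−σ}^n(Z) ) ] ≤ n·ε₀^{2−β}. -/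

import Mathlib

/-!
The log-likelihood ratio of an i.i.d. sample is the sum of the one-point log-likelihood ratios, so
its expectation under any i.i.d. law is `n` times the one-point expectation. At `(x0,1)` the two
hypotheses agree, and at `(x1,σ)`, `(x1,1-σ)` the one-point log ratio is `±ℓ` with
`ℓ = log ((1 + t) / (1 - t))`, `t = ε₀^{1-β} / C_β`. Since `P_ε(σ)` puts mass exactly `ε` more on
`(x1,σ)` than on `(x1,1-σ)`, the one-point expectation is `ε ℓ`, and `log y ≤ y - 1` gives
`ℓ ≤ 2t / (1 - t) ≤ ε₀^{1-β}`, the last step being `ε₀^{1-β} ≤ C_β - 2`. The second bound is the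
first one with `ε = ε₀`.
-/

/-- The Section-5 source distribution `P_ε(σ)` of the paper, on the three-point
sample space `Ω = {(x0,1), (x1,0), (x1,1)}` encoded as `Fin 3` with
`0 ↦ (x0,1)`, `1 ↦ (x1,0)`, `2 ↦ (x1,1)`. -/
noncomputable def srcPMF (Cβ β ε : ℝ) (σ : Bool) : Fin 3 → ℝ := fun ω =>
  if ω = 0 then 1 - Cβ * ε ^ β
  else if ω = (if σ then 2 else 1) then
    Cβ * ε ^ β * (1/2 + (1/2) * Cβ⁻¹ * ε ^ (1 - β))
  else Cβ * ε ^ β * (1/2 - (1/2) * Cβ⁻¹ * ε ^ (1 - β))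

open Finset Real

section Product

variable {R α : Type*} [CommSemiring R] [Fintype α]

theorem sum_pi_prod_mul_apply (p f : α → R) (hp : ∑ a, p a = 1) {n : ℕ} (i : Fin n) :
    ∑ z : Fin n → α, (∏ j, p (z j)) * f (z i) = ∑ a, p a * f a := by
  have hsplit (z : Fin n → α) : (∏ j, p (z j)) * f (z i)
      = ∏ j, p (z j) * if j = i then f (z j) else 1 := by
    rw [prod_mul_distrib, prod_ite_eq' univ i, if_pos (mem_univ i)]
  simp_rw [hsplit]
  rw [← Fintype.prod_sum (fun j a => p a * if j = i then f a else 1)]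
  simp [mul_ite, hp]

theorem sum_pi_prod_mul_sum_apply (p f : α → R) (hp : ∑ a, p a = 1) (n : ℕ) :
    ∑ z : Fin n → α, (∏ i, p (z i)) * ∑ i, f (z i) = n * ∑ a, p a * f a := by
  simp_rw [mul_sum]
  rw [sum_comm]
  simp [sum_pi_prod_mul_apply p f hp, ← mul_sum]

end Product

theorem Real.log_prod_div_prod {ι : Type*} (s : Finset ι) {f g : ι → ℝ}
    (hf : ∀ i ∈ s, f i ≠ 0) (hg : ∀ i ∈ s, g i ≠ 0) :
    log ((∏ i ∈ s, f i) / ∏ i ∈ s, g i) = ∑ i ∈ s, log (f i / g i) := by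
  rw [← prod_div_distrib, log_prod fun i hi => div_ne_zero (hf i hi) (hg i hi)]

theorem sum_pi_prod_mul_log_prod_div_prod {α : Type*} [Fintype α] (p q q' : α → ℝ)
    (hp : ∑ a, p a = 1) (hq : ∀ a, p a ≠ 0 → q a ≠ 0) (hq' : ∀ a, p a ≠ 0 → q' a ≠ 0) (n : ℕ) :
    ∑ z : Fin n → α, (∏ i, p (z i)) * log ((∏ i, q (z i)) / ∏ i, q' (z i))
      = n * ∑ a, p a * log (q a / q' a) := by
  rw [← sum_pi_prod_mul_sum_apply p _ hp]
  refine sum_congr rfl fun z _ => ?_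
  by_cases hz : ∀ i, p (z i) ≠ 0
  · rw [log_prod_div_prod _ (fun i _ => hq _ (hz i)) (fun i _ => hq' _ (hz i))]
  · obtain ⟨i, hi⟩ := not_forall_not.mp hz
    rw [prod_eq_zero (mem_univ i) hi, zero_mul, zero_mul]

theorem sum_srcPMF (Cβ β ε : ℝ) (σ : Bool) : ∑ ω, srcPMF Cβ β ε σ ω = 1 := by
  cases σ <;> simp [Fin.sum_univ_three, srcPMF] <;> ring

theorem log_half_add_div_half_sub_le {C s : ℝ} (hs : 0 ≤ s) (hsC : s ≤ C - 2) :
    log ((1/2 + 1/2 * C⁻¹ * s) / (1/2 - 1/2 * C⁻¹ * s)) ≤ s := by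
  have hC : 0 < C := by linarith
  have hden : 0 < 1/2 - 1/2 * C⁻¹ * s := by
    have : C⁻¹ * s < 1 := by rw [← div_eq_inv_mul, div_lt_one hC]; linarith
    linarith
  refine (log_le_sub_one_of_pos (div_pos (by positivity) hden)).trans ?_
  rw [div_sub_one hden.ne', div_le_iff₀ hden]
  field_simp
  nlinarith

theorem srcPMF_pos_of_ne_zero {Cβ β ε : ℝ} (hC : 0 < Cβ) (hε : 0 < ε) (hgap : ε ^ (1 - β) < Cβ)
    (σ : Bool) {ω : Fin 3} (hω : ω ≠ 0) : 0 < srcPMF Cβ β ε σ ω := by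
  have hhalf : 1/2 * Cβ⁻¹ * ε ^ (1 - β) < 1/2 := by
    have : Cβ⁻¹ * ε ^ (1 - β) < 1 := by rw [← div_eq_inv_mul, div_lt_one hC]; exact hgap
    linarith
  have hlo : 0 ≤ 1/2 * Cβ⁻¹ * ε ^ (1 - β) := by positivity
  have hmass : 0 < Cβ * ε ^ β := by positivity
  simp only [srcPMF, if_neg hω]
  split_ifs <;> exact mul_pos hmass (by linarith)

theorem srcPMF_ne_zero_of_ne_zero {Cβ β ε ε₀ : ℝ} (hβ : 0 ≤ β) (hC : 0 < Cβ) (hε₀ : 0 < ε₀)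
    (hle : ε₀ ≤ ε) (hCε : Cβ * ε ^ β ≤ 1) (hgap : ε₀ ^ (1 - β) < Cβ) (σ τ : Bool) (ω : Fin 3)
    (hω : srcPMF Cβ β ε σ ω ≠ 0) : srcPMF Cβ β ε₀ τ ω ≠ 0 := by
  rcases eq_or_ne ω 0 with rfl | hω0
  · have hmono : Cβ * ε₀ ^ β ≤ Cβ * ε ^ β := by gcongr
    have hlt : Cβ * ε ^ β < 1 := hCε.lt_of_ne fun h => hω (by simp [srcPMF, h])
    simp only [srcPMF, if_true]
    linarith
  · exact (srcPMF_pos_of_ne_zero hC hε₀ hgap τ hω0).ne'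

theorem sum_srcPMF_mul_log_div {Cβ β ε ε₀ : ℝ} (hC : Cβ ≠ 0) (hε : 0 < ε) (hε₀ : 0 < ε₀)
    (σ : Bool) :
    ∑ ω, srcPMF Cβ β ε σ ω * log (srcPMF Cβ β ε₀ σ ω / srcPMF Cβ β ε₀ (!σ) ω)
      = ε * log ((1/2 + 1/2 * Cβ⁻¹ * ε₀ ^ (1 - β)) / (1/2 - 1/2 * Cβ⁻¹ * ε₀ ^ (1 - β))) := by
  set ℓ := log ((1/2 + 1/2 * Cβ⁻¹ * ε₀ ^ (1 - β)) / (1/2 - 1/2 * Cβ⁻¹ * ε₀ ^ (1 - β)))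
  have hmass : Cβ * ε₀ ^ β ≠ 0 := by positivity
  have hplus : log (Cβ * ε₀ ^ β * (1/2 + 1/2 * Cβ⁻¹ * ε₀ ^ (1 - β))
      / (Cβ * ε₀ ^ β * (1/2 - 1/2 * Cβ⁻¹ * ε₀ ^ (1 - β)))) = ℓ := by
    rw [mul_div_mul_left _ _ hmass]
  have hminus : log (Cβ * ε₀ ^ β * (1/2 - 1/2 * Cβ⁻¹ * ε₀ ^ (1 - β))
      / (Cβ * ε₀ ^ β * (1/2 + 1/2 * Cβ⁻¹ * ε₀ ^ (1 - β)))) = -ℓ := by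
    rw [mul_div_mul_left _ _ hmass, ← log_inv, inv_div]
  have hdiff : Cβ * ε ^ β * (Cβ⁻¹ * ε ^ (1 - β)) = ε := by
    rw [mul_mul_mul_comm, mul_inv_cancel₀ hC, ← rpow_add hε, add_sub_cancel, rpow_one, one_mul]
  cases σ <;>
    simp only [Fin.sum_univ_three, srcPMF, ↓reduceIte, Fin.reduceEq, Bool.not_true,
      Bool.not_false, Bool.false_eq_true, log_div_self, hplus, hminus] <;>
    linear_combination ℓ * hdiff

theorem sum_pi_srcPMF_mul_log_likelihood_ratio_le {β Cβ ε ε₀ : ℝ} (hβ : 0 ≤ β) (hC : 2 ≤ Cβ)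
    (hε₀ : 0 < ε₀) (hle : ε₀ ≤ ε) (hCε : Cβ * ε ^ β ≤ 1) (hgap : ε₀ ^ (1 - β) ≤ Cβ - 2)
    (σ : Bool) (n : ℕ) :
    ∑ z : Fin n → Fin 3, (∏ i, srcPMF Cβ β ε σ (z i)) *
        log ((∏ i, srcPMF Cβ β ε₀ σ (z i)) / ∏ i, srcPMF Cβ β ε₀ (!σ) (z i))
      ≤ n * ε * ε₀ ^ (1 - β) := by
  have hC0 : 0 < Cβ := by linarith
  have hε : 0 < ε := hε₀.trans_le hle
  have hgap' : ε₀ ^ (1 - β) < Cβ := by linarith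
  have hsupp := srcPMF_ne_zero_of_ne_zero hβ hC0 hε₀ hle hCε hgap' σ
  rw [sum_pi_prod_mul_log_prod_div_prod _ _ _ (sum_srcPMF Cβ β ε σ) (hsupp σ) (hsupp !σ),
    sum_srcPMF_mul_log_div hC0.ne' hε hε₀, mul_assoc (n : ℝ) ε]
  gcongr
  exact log_half_add_div_half_sub_le (by positivity) hgap

theorem stmt11_general (β Cβ ε ε₀ : ℝ) (hβ : β ∈ Set.Ioo (0:ℝ) 1) (hC : 2 ≤ Cβ)
    (hε₀ : ε₀ ∈ Set.Ioo (0:ℝ) 1) (hle : ε₀ ≤ ε)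
    (hCε : Cβ * ε ^ β ≤ 1) (hgap : ε₀ ^ (1-β) ≤ Cβ - 2)
    (σ : Bool) (n : ℕ) :
    (∑ z : Fin n → Fin 3,
        (∏ i, srcPMF Cβ β ε σ (z i)) *
          Real.log ((∏ i, srcPMF Cβ β ε₀ σ (z i)) /
            (∏ i, srcPMF Cβ β ε₀ (!σ) (z i)))
      ≤ (n : ℝ) * ε * ε₀ ^ (1-β)) ∧
    (∑ z : Fin n → Fin 3,
        (∏ i, srcPMF Cβ β ε₀ σ (z i)) *
          Real.log ((∏ i, srcPMF Cβ β ε₀ σ (z i)) /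
            (∏ i, srcPMF Cβ β ε₀ (!σ) (z i)))
      ≤ (n : ℝ) * ε₀ ^ (2-β)) := by
  have hCε₀ : Cβ * ε₀ ^ β ≤ 1 := by
    refine le_trans ?_ hCε
    gcongr
    exacts [hε₀.1.le, hβ.1.le]
  refine ⟨sum_pi_srcPMF_mul_log_likelihood_ratio_le hβ.1.le hC hε₀.1 hle hCε hgap σ n, ?_⟩
  have hpow : ε₀ * ε₀ ^ (1 - β) = ε₀ ^ (2 - β) := by
    rw [show (2 : ℝ) - β = 1 + (1 - β) by ring, rpow_add hε₀.1, rpow_one]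
  simpa only [mul_assoc, hpow] using
    sum_pi_srcPMF_mul_log_likelihood_ratio_le hβ.1.le hC hε₀.1 le_rfl hCε₀ hgap σ n

/-- display (16) in the proof of Theorem 5.2 of the paper.
With `P = P_ε(σ)`, `Q_σ = P_{ε₀}(σ)` and `Q_{1−σ} = P_{ε₀}(1−σ)`, for i.i.d.
samples of size `n`:
`E_{Z~P^n}[log(Q_σ^n(Z)/Q_{1−σ}^n(Z))] ≤ n·ε·ε₀^{1−β}` and
`E_{Z~Q_σ^n}[log(Q_σ^n(Z)/Q_{1−σ}^n(Z))] ≤ n·ε₀^{2−β}`. -/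
theorem stmt11 (β Cβ ε ε₀ : ℝ) (hβ : β ∈ Set.Ioo (0:ℝ) 1) (hC : 2 ≤ Cβ)
    (hε : ε ∈ Set.Ioo (0:ℝ) 1) (hε₀ : ε₀ ∈ Set.Ioo (0:ℝ) 1) (hle : ε₀ ≤ ε)
    (hCε : Cβ * ε ^ β ≤ 1) (hgap : ε₀ ^ (1-β) ≤ Cβ - 2)
    (σ : Bool) (n : ℕ) :
    (∑ z : Fin n → Fin 3,
        (∏ i, srcPMF Cβ β ε σ (z i)) *
          Real.log ((∏ i, srcPMF Cβ β ε₀ σ (z i)) /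
            (∏ i, srcPMF Cβ β ε₀ (!σ) (z i)))
      ≤ (n : ℝ) * ε * ε₀ ^ (1-β)) ∧
    (∑ z : Fin n → Fin 3,
        (∏ i, srcPMF Cβ β ε₀ σ (z i)) *
          Real.log ((∏ i, srcPMF Cβ β ε₀ σ (z i)) /
            (∏ i, srcPMF Cβ β ε₀ (!σ) (z i)))
      ≤ (n : ℝ) * ε₀ ^ (2-β)) :=
  stmt11_general β Cβ ε ε₀ hβ hC hε₀ hle hCε hgap σ n
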